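/- Let n ≥ 2 and suppose the growth function is f(k) = n^k + 1. Then for every d ≥ 1 and μ ≥ 0, the cardinality of the nested Smolyak grid is N(d,μ) = Σ_{k=0}^{min(d,μ)} C(d,k) · (−2n)^k · (n+1)^{d−k} · Σ_{ℓ=0}^{μ−k} C(d+ℓ−1, ℓ) · n^ℓ (an identity in ℤ). -/

import Mathlib

/-- Multi-indices `i : Fin d → ℕ` with `i k ≥ 1` for all `k` and `∑ k, i k = d + μ`. -/
def smolyakIndices (d μ : ℕ) : Finset (Fin d → ℕ) :=
  (Fintype.piFinset fun _ => Finset.Icc 1 (d + μ)).filter fun i => ∑ k, i k = d + μ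

/-- The Smolyak grid `Γ(d, μ)` based on the node sets `S`. -/
noncomputable def smolyakGrid (S : ℕ → Finset ℝ) (d μ : ℕ) : Finset (Fin d → ℝ) :=
  (smolyakIndices d μ).biUnion fun i => Fintype.piFinset fun k => S (i k)

/-- `N(d, μ)`: the number of nodes in the Smolyak grid. -/
noncomputable def smolyakCard (S : ℕ → Finset ℝ) (d μ : ℕ) : ℕ :=
  (smolyakGrid S d μ).card

/-!
Sort the points of the node sets into layers: layer `j` consists of the points that first appear in
`S (j + 1)`. Since `S m` is the union of the layers `j < m`, a point lies in the box
`S (i 0) × ⋯ × S (i (d - 1))` with `∑ i = d + μ` for some `i ≥ 1` exactly when its layer indices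
`a` satisfy `∑ a ≤ μ`. Hence the grid is the disjoint union of the boxes `∏ₖ layer (a k)` with
`∑ a ≤ μ`, and `N(d, μ)` is the `μ`-th coefficient of `(1 - X)⁻¹ L(X)ᵈ`, where `L` is the
generating function of the layer sizes. For `f(k) = nᵏ + 1` these are `n + 1` and `(n - 1) nʲ`
(`j ≥ 1`), so `L(X) = (n + 1 - 2nX) / (1 - nX)`; the binomial theorem for `(n + 1 - 2nX)ᵈ` and the
coefficients `C(d + ℓ - 1, ℓ) nˡ` of `(1 - nX)⁻ᵈ` give the formula.
-/

open PowerSeries Finset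

def sumLeTuples (d μ : ℕ) : Finset (Fin d → ℕ) :=
  (Fintype.piFinset fun _ => range (μ + 1)).filter fun a => ∑ k, a k ≤ μ

theorem mem_sumLeTuples {d μ : ℕ} {a : Fin d → ℕ} : a ∈ sumLeTuples d μ ↔ ∑ k, a k ≤ μ := by
  simp only [sumLeTuples, mem_filter, Fintype.mem_piFinset, mem_range, and_iff_right_iff_imp]
  exact fun h k =>
    Nat.lt_succ_of_le ((single_le_sum (fun _ _ => Nat.zero_le _) (mem_univ k)).trans h)

namespace PowerSeries

variable {R : Type*} [CommRing R]

theorem coeff_mk_one_mul (m : ℕ) (P : R⟦X⟧) :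
    coeff m (mk 1 * P) = ∑ ℓ ∈ range (m + 1), coeff ℓ P := by
  rw [mul_comm, coeff_mul, Nat.sum_antidiagonal_eq_sum_range_succ_mk]
  simp

theorem coeff_mk_one_pow (d ℓ : ℕ) :
    coeff ℓ ((mk 1 : R⟦X⟧) ^ d) = (d + ℓ - 1).choose ℓ := by
  cases d with
  | zero => rcases ℓ with _ | ℓ <;> simp [coeff_one]
  | succ e =>
    rw [mk_one_pow_eq_mk_choose_add, coeff_mk, Nat.choose_symm_add, add_right_comm,
      Nat.add_sub_cancel]

theorem coeff_prod_univ {ι : Type*} [Fintype ι] [DecidableEq ι] (f : ι → R⟦X⟧) (m : ℕ) :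
    coeff m (∏ i, f i) = ∑ a ∈ piAntidiag univ m, ∏ i, coeff (a i) (f i) := by
  rw [coeff_prod]
  refine sum_nbij' (⇑) Finsupp.equivFunOnFinite.symm ?_ ?_ ?_ ?_ ?_ <;> simp

theorem coeff_mk_one_mul_pow_linear_mul_rescale (a b r : R) (d μ : ℕ) :
    coeff μ (mk 1 * ((C a + C b * X) * rescale r (mk 1)) ^ d) =
      ∑ k ∈ range (min d μ + 1), (d.choose k : R) * b ^ k * a ^ (d - k) *
        ∑ ℓ ∈ range (μ - k + 1), ((d + ℓ - 1).choose ℓ : R) * r ^ ℓ := by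
  have binomial : (C a + C b * X) ^ d =
      ∑ k ∈ range (d + 1), C ((d.choose k : R) * b ^ k * a ^ (d - k)) * X ^ k := by
    rw [add_comm, add_pow]
    refine sum_congr rfl fun k _ => ?_
    simp only [mul_pow, ← map_pow, map_mul, map_natCast]
    ring
  have tail (m : ℕ) : coeff m (mk 1 * rescale r ((mk 1 : R⟦X⟧) ^ d)) =
      ∑ ℓ ∈ range (m + 1), ((d + ℓ - 1).choose ℓ : R) * r ^ ℓ := by
    simp only [coeff_mk_one_mul, coeff_rescale, coeff_mk_one_pow, mul_comm]
  calc coeff μ (mk 1 * ((C a + C b * X) * rescale r (mk 1)) ^ d)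
      = ∑ k ∈ range (d + 1), coeff μ (C ((d.choose k : R) * b ^ k * a ^ (d - k)) *
          (X ^ k * (mk 1 * rescale r ((mk 1 : R⟦X⟧) ^ d)))) := by
        rw [mul_pow, binomial, map_pow, sum_mul, mul_sum, ← map_sum]
        refine congrArg _ (sum_congr rfl fun k _ => by ring)
    _ = ∑ k ∈ range (d + 1) with k ≤ μ, (d.choose k : R) * b ^ k * a ^ (d - k) *
          ∑ ℓ ∈ range (μ - k + 1), ((d + ℓ - 1).choose ℓ : R) * r ^ ℓ := by
        rw [sum_filter]
        refine sum_congr rfl fun k _ => ?_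
        rw [coeff_C_mul, coeff_X_pow_mul', tail]
        split_ifs <;> simp
    _ = _ := by
        congr 1
        ext k
        simp only [mem_filter, mem_range]
        omega

theorem sum_sumLeTuples_prod_coeff (d μ : ℕ) (P : R⟦X⟧) :
    ∑ a ∈ sumLeTuples d μ, ∏ k, coeff (a k) P = coeff μ (mk 1 * P ^ d) := by
  rw [coeff_mk_one_mul, ← Fin.prod_const]
  simp_rw [coeff_prod_univ]
  rw [← sum_fiberwise_of_maps_to (s := sumLeTuples d μ) (t := range (μ + 1))
    (g := fun a => ∑ k, a k)
    fun a ha => mem_range.2 (Nat.lt_succ_of_le (mem_sumLeTuples.1 ha))]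
  refine sum_congr rfl fun m hm => sum_congr ?_ fun _ _ => rfl
  ext a
  simp only [mem_filter, mem_sumLeTuples, mem_piAntidiag, mem_univ, implies_true, and_true]
  exact ⟨And.right, fun h => ⟨h ▸ Nat.le_of_lt_succ (mem_range.1 hm), h⟩⟩

end PowerSeries

section Layers

variable {α : Type*} {S : ℕ → Finset α}

theorem subset_of_le_of_nested (hS : ∀ k, 1 ≤ k → S k ⊆ S (k + 1)) {j k : ℕ} (hj : 1 ≤ j)
    (hjk : j ≤ k) : S j ⊆ S k :=
  monotoneOn_nat_Ici_of_le_succ hS hj (hj.trans hjk) hjk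

variable [DecidableEq α]

-- `S 0` is not one of the node sets, so layer `0` is all of `S 1`.
variable (S) in
def smolyakLayer (j : ℕ) : Finset α := if j = 0 then S 1 else S (j + 1) \ S j

variable (S) in
theorem smolyakLayer_subset (j : ℕ) : smolyakLayer S j ⊆ S (j + 1) := by
  unfold smolyakLayer
  split_ifs with h
  · rw [h]
  · exact sdiff_subset

theorem disjoint_smolyakLayer (hS : ∀ k, 1 ≤ k → S k ⊆ S (k + 1)) {i j : ℕ} (hij : i ≠ j) :
    Disjoint (smolyakLayer S i) (smolyakLayer S j) := by
  wlog h : i < j generalizing i j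
  · exact (this hij.symm (by omega)).symm
  rw [show smolyakLayer S j = S (j + 1) \ S j from if_neg (by omega)]
  exact disjoint_sdiff.mono_left
    ((smolyakLayer_subset S i).trans (subset_of_le_of_nested hS (by omega) h))

theorem exists_mem_smolyakLayer {m : ℕ} (hm : 1 ≤ m) {x : α} (hx : x ∈ S m) :
    ∃ j < m, x ∈ smolyakLayer S j := by
  induction m, hm using Nat.le_induction with
  | base => exact ⟨0, one_pos, by simpa [smolyakLayer] using hx⟩
  | succ m hm ih =>
    by_cases hxm : x ∈ S m
    · obtain ⟨j, hj, hxj⟩ := ih hxm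
      exact ⟨j, by omega, hxj⟩
    · refine ⟨m, by omega, ?_⟩
      rw [smolyakLayer, if_neg (by omega)]
      exact mem_sdiff.2 ⟨hx, hxm⟩

end Layers

theorem mem_smolyakIndices {d μ : ℕ} {i : Fin d → ℕ} :
    i ∈ smolyakIndices d μ ↔ (∀ k, 1 ≤ i k) ∧ ∑ k, i k = d + μ := by
  simp only [smolyakIndices, mem_filter, Fintype.mem_piFinset, mem_Icc]
  constructor
  · exact fun ⟨h, hsum⟩ => ⟨fun k => (h k).1, hsum⟩
  · refine fun ⟨h, hsum⟩ => ⟨fun k => ⟨h k, hsum ▸ ?_⟩, hsum⟩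
    exact single_le_sum (fun _ _ => Nat.zero_le _) (mem_univ k)

theorem sum_le_of_lt_of_mem_smolyakIndices {d μ : ℕ} {i a : Fin d → ℕ}
    (hi : i ∈ smolyakIndices d μ) (hai : ∀ k, a k < i k) : ∑ k, a k ≤ μ := by
  have hle : ∑ k, (a k + 1) ≤ ∑ k, i k := sum_le_sum fun k _ => hai k
  rw [sum_add_distrib, Fin.sum_const, smul_eq_mul, mul_one, (mem_smolyakIndices.1 hi).2] at hle
  omega

theorem exists_mem_smolyakIndices_lt {d μ : ℕ} (hd : 1 ≤ d) {a : Fin d → ℕ}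
    (ha : ∑ k, a k ≤ μ) : ∃ i ∈ smolyakIndices d μ, ∀ k, a k < i k := by
  let i : Fin d → ℕ := fun k =>
    a k + 1 + (Pi.single (⟨0, hd⟩ : Fin d) (μ - ∑ k, a k) : Fin d → ℕ) k
  have hsum : ∑ k, i k = d + μ := by
    simp only [i, sum_add_distrib, Fin.sum_const, smul_eq_mul, mul_one, sum_pi_single',
      if_pos (mem_univ _)]
    omega
  refine ⟨i, mem_smolyakIndices.2 ⟨fun k => ?_, hsum⟩, fun k => ?_⟩ <;>
    simp only [i] <;> omega

theorem smolyakGrid_eq_biUnion_smolyakLayer {S : ℕ → Finset ℝ}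
    (hS : ∀ k, 1 ≤ k → S k ⊆ S (k + 1)) {d : ℕ} (hd : 1 ≤ d) (μ : ℕ) :
    smolyakGrid S d μ =
      (sumLeTuples d μ).biUnion fun a => Fintype.piFinset fun k => smolyakLayer S (a k) := by
  ext x
  simp only [smolyakGrid, mem_biUnion, Fintype.mem_piFinset, mem_sumLeTuples]
  constructor
  · rintro ⟨i, hi, hx⟩
    choose a hai hxa using fun k =>
      exists_mem_smolyakLayer ((mem_smolyakIndices.1 hi).1 k) (hx k)
    exact ⟨a, sum_le_of_lt_of_mem_smolyakIndices hi hai, hxa⟩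
  · rintro ⟨a, ha, hx⟩
    obtain ⟨i, hi, hai⟩ := exists_mem_smolyakIndices_lt hd ha
    exact ⟨i, hi, fun k =>
      subset_of_le_of_nested hS (by omega) (hai k) (smolyakLayer_subset S (a k) (hx k))⟩

theorem card_smolyakGrid {S : ℕ → Finset ℝ} (hS : ∀ k, 1 ≤ k → S k ⊆ S (k + 1)) {d : ℕ}
    (hd : 1 ≤ d) (μ : ℕ) :
    (smolyakGrid S d μ).card = ∑ a ∈ sumLeTuples d μ, ∏ k, (smolyakLayer S (a k)).card := by
  rw [smolyakGrid_eq_biUnion_smolyakLayer hS hd, card_biUnion]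
  · simp_rw [Fintype.card_piFinset]
  · intro a _ b _ hab
    obtain ⟨k, hk⟩ := Function.ne_iff.1 hab
    exact Fintype.piFinset_disjoint_of_disjoint _ _ (disjoint_smolyakLayer hS hk)

theorem card_smolyakLayer_eq_coeff {α : Type*} [DecidableEq α] {S : ℕ → Finset α}
    (hS : ∀ k, 1 ≤ k → S k ⊆ S (k + 1)) {n : ℕ} (hc : ∀ k, 1 ≤ k → (S k).card = n ^ k + 1)
    (j : ℕ) : ((smolyakLayer S j).card : ℤ) =
      coeff j ((C ((n : ℤ) + 1) + C (-2 * (n : ℤ)) * X) * rescale (n : ℤ) (mk 1)) := by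
  rw [add_mul, map_add, coeff_C_mul, mul_assoc, coeff_C_mul, coeff_rescale]
  cases j with
  | zero => simp [smolyakLayer, hc 1 le_rfl]
  | succ j =>
    rw [smolyakLayer, if_neg j.succ_ne_zero, card_sdiff_of_subset (hS _ (by omega)),
      Nat.cast_sub (card_le_card (hS _ (by omega))), hc _ (by omega), hc _ (by omega),
      coeff_succ_X_mul, coeff_rescale]
    simp only [coeff_mk, Pi.one_apply]
    push_cast
    ring

theorem smolyakCard_of_pow_add_one_general
    (n : ℕ)
    (S : ℕ → Finset ℝ) (hS_nested : ∀ k, 1 ≤ k → S k ⊆ S (k + 1))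
    (hS_card : ∀ k, 1 ≤ k → (S k).card = n ^ k + 1)
    (d μ : ℕ) (hd : 1 ≤ d) :
    (smolyakCard S d μ : ℤ) =
      ∑ k ∈ Finset.range (min d μ + 1),
        (d.choose k : ℤ) * (-2 * (n : ℤ)) ^ k * ((n : ℤ) + 1) ^ (d - k) *
          ∑ ℓ ∈ Finset.range (μ - k + 1), ((d + ℓ - 1).choose ℓ : ℤ) * (n : ℤ) ^ ℓ := by
  rw [smolyakCard, card_smolyakGrid hS_nested hd, Nat.cast_sum]
  simp only [Nat.cast_prod, card_smolyakLayer_eq_coeff hS_nested hS_card]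
  rw [sum_sumLeTuples_prod_coeff, coeff_mk_one_mul_pow_linear_mul_rescale]

/-- For the growth function `f(k) = nᵏ + 1` (with `n ≥ 2`), the nested Smolyak grid has
`N(d, μ) = ∑_{k=0}^{min(d, μ)} C(d, k) (-2n)ᵏ (n+1)^(d-k) ∑_{ℓ=0}^{μ-k} C(d+ℓ-1, ℓ) nˡ`
nodes (an identity in `ℤ`). -/
theorem smolyakCard_of_pow_add_one
    (n : ℕ) (hn : 2 ≤ n)
    (S : ℕ → Finset ℝ) (hS_nested : ∀ k, 1 ≤ k → S k ⊆ S (k + 1))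
    (hS_card : ∀ k, 1 ≤ k → (S k).card = n ^ k + 1)
    (d μ : ℕ) (hd : 1 ≤ d) :
    (smolyakCard S d μ : ℤ) =
      ∑ k ∈ Finset.range (min d μ + 1),
        (d.choose k : ℤ) * (-2 * (n : ℤ)) ^ k * ((n : ℤ) + 1) ^ (d - k) *
          ∑ ℓ ∈ Finset.range (μ - k + 1), ((d + ℓ - 1).choose ℓ : ℤ) * (n : ℤ) ^ ℓ :=
  smolyakCard_of_pow_add_one_general n S hS_nested hS_card d μ hd
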